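/- Let n, k, l ∈ ℕ and let U₁,…,U_k, V₁,…,V_l be elements of the free group on n generators. If there exist a group H and elements a₁,…,aₙ ∈ H such that Uᵢ(a₁,…,aₙ) = 1 for all i ≤ k and Vⱼ(a₁,…,aₙ) ≠ 1 for all j ≤ l, then every algebraically closed group G contains elements b₁,…,bₙ with Uᵢ(b₁,…,bₙ) = 1 for all i ≤ k and Vⱼ(b₁,…,bₙ) ≠ 1 for all j ≤ l. -/

import Mathlib

/-!
A solution `a` in `H` also lives in the small group `FreeGroup (Fin n) ⧸ ker (lift a)`, which
embeds into `H` and can be lifted to any universe. Placing it in the second factor of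
`G × K` gives a solution over the extension `G ↪ G × K`, so algebraic closedness of `G`
pulls the system back into `G`.
-/

universe u

/-- A group `G` is algebraically closed if every finite system of equations and
inequations with coefficients from `G` (elements of the free product
`FreeGroup (Fin n) ∗ G`) that has a solution in some group extending `G`
has a solution in `G` itself. -/
def IsAlgClosedGroup (G : Type u) [Group G] : Prop :=
  ∀ (n k l : ℕ) (w : Fin k → Monoid.Coprod (FreeGroup (Fin n)) G)
    (v : Fin l → Monoid.Coprod (FreeGroup (Fin n)) G),
    (∃ (H : Type u) (_ : Group H) (f : G →* H), Function.Injective f ∧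
      ∃ x : Fin n → H,
        (∀ i, Monoid.Coprod.lift (FreeGroup.lift x) f (w i) = 1) ∧
        (∀ j, Monoid.Coprod.lift (FreeGroup.lift x) f (v j) ≠ 1)) →
    ∃ x' : Fin n → G,
      (∀ i, Monoid.Coprod.lift (FreeGroup.lift x') (MonoidHom.id G) (w i) = 1) ∧
      (∀ j, Monoid.Coprod.lift (FreeGroup.lift x') (MonoidHom.id G) (v j) ≠ 1)

universe v

namespace FreeGroup

variable {ι κ μ : Type*} {H K : Type*} [Group H] [Group K]

def IsSolution (U : κ → FreeGroup ι) (V : μ → FreeGroup ι) (a : ι → H) : Prop :=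
  (∀ i, lift a (U i) = 1) ∧ ∀ j, lift a (V j) ≠ 1

theorem lift_comp_apply (φ : H →* K) (a : ι → H) (w : FreeGroup ι) :
    lift (φ ∘ a) w = φ (lift a w) :=
  (lift_unique (φ.comp (lift a)) fun _ ↦ by simp).symm

theorem isSolution_comp_iff {U : κ → FreeGroup ι} {V : μ → FreeGroup ι} {φ : H →* K}
    (hφ : Function.Injective φ) {a : ι → H} :
    IsSolution U V (φ ∘ a) ↔ IsSolution U V a := by
  simp only [IsSolution, lift_comp_apply, ne_eq, map_eq_one_iff φ hφ]

theorem IsSolution.exists_ulift.{w} {ι : Type w} {U : κ → FreeGroup ι}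
    {V : μ → FreeGroup ι} {a : ι → H} (ha : IsSolution U V a) :
    ∃ (L : Type (max w u)) (_ : Group L) (b : ι → L), IsSolution U V b := by
  let Q := FreeGroup ι ⧸ (lift a).ker
  let b : ι → ULift.{u} Q := fun i ↦ ULift.up (of i : Q)
  let ψ : ULift.{u} Q →* H := (QuotientGroup.kerLift (lift a)).comp MulEquiv.ulift.toMonoidHom
  have hψ : Function.Injective ψ :=
    (QuotientGroup.kerLift_injective _).comp MulEquiv.ulift.injective
  have hb : ψ ∘ b = a := funext fun i ↦ (QuotientGroup.kerLift_mk _ (of i)).trans lift_apply_of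
  exact ⟨ULift.{u} Q, inferInstance, b, (isSolution_comp_iff hψ).mp (hb.symm ▸ ha)⟩

end FreeGroup

open FreeGroup in
theorem IsAlgClosedGroup.exists_isSolution {G : Type u} {H : Type*} [Group G] [Group H]
    (hG : IsAlgClosedGroup G) {n k l : ℕ} {U : Fin k → FreeGroup (Fin n)}
    {V : Fin l → FreeGroup (Fin n)} {a : Fin n → H} (ha : IsSolution U V a) :
    ∃ b : Fin n → G, IsSolution U V b := by
  obtain ⟨K, _, y, hy⟩ : ∃ (K : Type u) (_ : Group K) (y : Fin n → K), IsSolution U V y :=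
    ha.exists_ulift
  have hx : IsSolution U V (MonoidHom.inr G K ∘ y) :=
    (isSolution_comp_iff (Prod.mk_right_injective 1)).mpr hy
  simpa [IsSolution] using hG n k l (Monoid.Coprod.inl ∘ U) (Monoid.Coprod.inl ∘ V)
    ⟨G × K, inferInstance, MonoidHom.inl G K, Prod.mk_left_injective 1, _,
      by simpa [IsSolution] using hx⟩

/-- If a finite system of equations `Uᵢ = 1` and inequations `Vⱼ ≠ 1` of group words
in `n` generators has a solution in some group `H`, then it has a solution in every
algebraically closed group `G`. -/
theorem solvable_in_algClosed_of_solvable (n k l : ℕ)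
    (U : Fin k → FreeGroup (Fin n)) (V : Fin l → FreeGroup (Fin n))
    (H : Type v) [Group H] (a : Fin n → H)
    (hU : ∀ i, FreeGroup.lift a (U i) = 1) (hV : ∀ j, FreeGroup.lift a (V j) ≠ 1)
    (G : Type u) [Group G] (hG : IsAlgClosedGroup G) :
    ∃ b : Fin n → G, (∀ i, FreeGroup.lift b (U i) = 1) ∧
      ∀ j, FreeGroup.lift b (V j) ≠ 1 :=
  hG.exists_isSolution ⟨hU, hV⟩
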